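/- Let d be a natural number that is not a perfect square, a_0 = ⌊√d⌋, and (a_n) the sequence of partial quotients of √d. Then (a_n)_{n≥1} is periodic; denoting by T its minimal period (so a_{n+T} = a_n for all n ≥ 1), one has a_T = 2a_0, and the list (a_1, a_2, …, a_{T−1}) is a palindrome: a_k = a_{T−k} for all k with 1 ≤ k ≤ T−1. -/

import Mathlib

/-- The complete quotients of a real number `x`:
`cq x 0 = x` and `cq x (n+1) = 1 / (cq x n - ⌊cq x n⌋)`. -/
noncomputable def cq (x : ℝ) : ℕ → ℝ
  | 0 => x
  | n + 1 => (Int.fract (cq x n))⁻¹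

/-- The partial quotients of a real number `x`: `pq x n = ⌊cq x n⌋`. -/
noncomputable def pq (x : ℝ) (n : ℕ) : ℤ := ⌊cq x n⌋

/-!
Write `cq √d n = (P_n + √d) / Q_n` with integers `Q_n ∣ d - P_n ^ 2`. For `n ≥ 1` the conjugate
`(P_n - √d) / Q_n` lies in `(-1, 0)`, which bounds `P_n` and `Q_n`, so some complete quotient
repeats. The conjugate of `x_{n+1}` recovers `a_n = ⌊-1 / conj x_{n+1}⌋`, so the expansion can be
run backwards and is purely periodic from `x_1`. Any period `T` of the partial quotients is one of
the complete quotients: two purely periodic expansions with the same partial quotients move apart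
at every step unless they coincide. Finally `-1 / conj x_{T+1} = -1 / conj x_1 = √d + a_0`, and
reading the conjugates backwards expands `√d + a_0` as `[a_T; a_{T-1}, …, a_1, …]`; comparing with
`[2 a_0; a_1, a_2, …]` gives `a_T = 2 a_0` and the palindrome.
-/
section ContinuedFraction

variable {x y : ℝ}

lemma cq_succ (x : ℝ) (n : ℕ) : cq x (n + 1) = (cq x n - pq x n)⁻¹ := by
  rw [cq, pq, Int.self_sub_floor]

lemma cq_add (x : ℝ) (n m : ℕ) : cq x (n + m) = cq (cq x n) m := by
  induction m with
  | zero => rfl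
  | succ m ih => rw [← Nat.add_assoc, cq, ih, cq]

lemma pq_add (x : ℝ) (n m : ℕ) : pq x (n + m) = pq (cq x n) m := by
  rw [pq, pq, cq_add]

lemma cq_eq_pq_add_inv (x : ℝ) (n : ℕ) : cq x n = pq x n + (cq x (n + 1))⁻¹ := by
  rw [cq_succ, inv_inv]
  ring

lemma cq_add_intCast (x : ℝ) (z : ℤ) {n : ℕ} (hn : 1 ≤ n) : cq (x + z) n = cq x n := by
  obtain ⟨m, rfl⟩ := Nat.exists_eq_add_of_le hn
  rw [cq_add, cq_add]
  simp only [cq, Int.fract_add_intCast]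

lemma cq_add_of_cq_eq {S : ℕ} (h : cq x (1 + S) = cq x 1) {n : ℕ} (hn : 1 ≤ n) :
    cq x (n + S) = cq x n := by
  obtain ⟨m, rfl⟩ := Nat.exists_eq_add_of_le hn
  rw [Nat.add_right_comm, cq_add, h, ← cq_add]

lemma irrational_cq (hx : Irrational x) (n : ℕ) : Irrational (cq x n) := by
  induction n with
  | zero => exact hx
  | succ n ih => exact (ih.sub_intCast _).inv

lemma one_lt_cq (hx : Irrational x) {n : ℕ} (hn : 1 ≤ n) : 1 < cq x n := by
  obtain ⟨m, rfl⟩ := Nat.exists_eq_add_of_le' hn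
  have hfract : Int.fract (cq x m) ≠ 0 := by
    simpa [Int.self_sub_floor] using ((irrational_cq hx m).sub_intCast ⌊cq x m⌋).ne_int 0
  exact (one_lt_inv₀ ((Int.fract_nonneg _).lt_of_ne' hfract)).2 (Int.fract_lt_one _)

lemma abs_sub_cq_succ (hx : Irrational x) (hy : Irrational y) {n : ℕ} (h : pq x n = pq y n) :
    |cq x (n + 1) - cq y (n + 1)| = |cq x n - cq y n| * (cq x (n + 1) * cq y (n + 1)) := by
  have hx0 := (one_lt_cq hx (Nat.le_add_left 1 n)).trans' zero_lt_one
  have hy0 := (one_lt_cq hy (Nat.le_add_left 1 n)).trans' zero_lt_one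
  rw [cq_eq_pq_add_inv x n, cq_eq_pq_add_inv y n, h, abs_sub_comm,
    ← abs_of_pos (mul_pos hx0 hy0), ← abs_mul]
  congr 1
  field_simp
  ring

/-- The distance between the complete quotients grows at every step, yet returns to `|x - y|`. -/
lemma eq_of_pq_eq_of_cq_eq (hx : Irrational x) (hy : Irrational y) (hpq : ∀ n, pq x n = pq y n)
    {S : ℕ} (hS : 1 ≤ S) (hxS : cq x S = x) (hyS : cq y S = y) : x = y := by
  set g : ℕ → ℝ := fun n => |cq x n - cq y n|
  have hstep (n : ℕ) : g (n + 1) = g n * (cq x (n + 1) * cq y (n + 1)) :=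
    abs_sub_cq_succ hx hy (hpq n)
  have hgrow (n : ℕ) : 1 < cq x (n + 1) * cq y (n + 1) :=
    one_lt_mul_of_lt_of_le (one_lt_cq hx (Nat.le_add_left 1 n))
      (one_lt_cq hy (Nat.le_add_left 1 n)).le
  have hmono : Monotone g := monotone_nat_of_le_succ fun n => by
    rw [hstep]
    exact le_mul_of_one_le_right (abs_nonneg _) (hgrow n).le
  by_contra hne
  have hg0 : 0 < g 0 := abs_pos.2 (sub_ne_zero.2 hne)
  have : g 0 < g S := calc
    g 0 < g 1 := by rw [hstep]; exact lt_mul_of_one_lt_right hg0 (hgrow 0)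
    _ ≤ g S := hmono hS
  simp [g, hxS, hyS, cq] at this

section QuadraticSurd

variable {s : ℝ} {d : ℤ}

noncomputable def surdVal (s : ℝ) (v : ℤ × ℤ) : ℝ := (v.1 + s) / v.2

/-- The encoding of `((P + s) / Q - a)⁻¹` when `s ^ 2 = d` (see `inv_sub_surdVal`). -/
def surdStep (d a : ℤ) (v : ℤ × ℤ) : ℤ × ℤ :=
  (a * v.2 - v.1, (d - (a * v.2 - v.1) ^ 2) / v.2)

lemma surdStep_snd_mul {a : ℤ} {v : ℤ × ℤ} (hv : v.2 ∣ d - v.1 ^ 2) :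
    v.2 * (surdStep d a v).2 = d - (surdStep d a v).1 ^ 2 := by
  refine Int.mul_ediv_cancel' ?_
  have : d - (a * v.2 - v.1) ^ 2 = d - v.1 ^ 2 + v.2 * (2 * a * v.1 - a ^ 2 * v.2) := by ring
  rw [this]
  exact dvd_add hv (dvd_mul_right _ _)

lemma surdStep_snd_ne_zero (hs : s ^ 2 = d) (hirr : Irrational s) {a : ℤ} {v : ℤ × ℤ}
    (hv : v.2 ∣ d - v.1 ^ 2) : (surdStep d a v).2 ≠ 0 := by
  intro h0
  have hsq : s ^ 2 = ((surdStep d a v).1 : ℝ) ^ 2 := by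
    have := surdStep_snd_mul (a := a) hv
    rw [h0, mul_zero, eq_comm, sub_eq_zero] at this
    rw [hs, this]
    push_cast
    rfl
  rcases sq_eq_sq_iff_eq_or_eq_neg.1 hsq with h | h
  · exact hirr.ne_int _ h
  · exact hirr.ne_int (-(surdStep d a v).1) (by push_cast; exact h)

lemma inv_sub_surdVal (hs : s ^ 2 = d) (hirr : Irrational s) (a : ℤ) {v : ℤ × ℤ}
    (hv0 : v.2 ≠ 0) (hv : v.2 ∣ d - v.1 ^ 2) :
    (surdVal s v - a)⁻¹ = surdVal s (surdStep d a v) := by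
  have hQ : (v.2 : ℝ) ≠ 0 := Int.cast_ne_zero.2 hv0
  have hQ' : ((surdStep d a v).2 : ℝ) ≠ 0 :=
    Int.cast_ne_zero.2 (surdStep_snd_ne_zero hs hirr hv)
  have hP' : s - (surdStep d a v).1 ≠ 0 := sub_ne_zero.2 (hirr.ne_int _)
  have hmul : (v.2 : ℝ) * (surdStep d a v).2 =
      (s - (surdStep d a v).1) * (s + (surdStep d a v).1) := by
    have hcast : (v.2 : ℝ) * (surdStep d a v).2 = d - ((surdStep d a v).1 : ℝ) ^ 2 := by
      exact_mod_cast surdStep_snd_mul hv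
    linear_combination hcast - hs
  have hsub : surdVal s v - a = (s - (surdStep d a v).1) / v.2 := by
    simp only [surdVal, surdStep]
    field_simp
    push_cast
    ring
  rw [hsub, inv_div, surdVal, div_eq_div_iff hP' hQ']
  linear_combination hmul

lemma surdVal_injective (hirr : Irrational s) {v w : ℤ × ℤ} (hv : v.2 ≠ 0) (hw : w.2 ≠ 0)
    (h : surdVal s v = surdVal s w) : v = w := by
  have hv' : (v.2 : ℝ) ≠ 0 := Int.cast_ne_zero.2 hv
  have hw' : (w.2 : ℝ) ≠ 0 := Int.cast_ne_zero.2 hw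
  rw [surdVal, surdVal, div_eq_div_iff hv' hw'] at h
  have hQ : v.2 = w.2 := by
    by_contra hne
    refine (hirr.mul_intCast (sub_ne_zero.2 (Ne.symm hne))).ne_int (w.1 * v.2 - v.1 * w.2) ?_
    push_cast
    linear_combination h
  have hP : (v.1 : ℝ) = w.1 := by
    rw [hQ] at h
    exact mul_right_cancel₀ hw' (by linear_combination h)
  exact Prod.ext (by exact_mod_cast hP) hQ

end QuadraticSurd

section SqrtContinuedFraction

variable {d : ℕ}

/-- `cq √d n = (P_n + √d) / Q_n` for `(P_n, Q_n) = sqrtPQ d n` (see `cq_sqrt_eq_surdVal`). -/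
noncomputable def sqrtPQ (d : ℕ) : ℕ → ℤ × ℤ
  | 0 => (0, 1)
  | n + 1 => surdStep d (pq √d n) (sqrtPQ d n)

noncomputable def cqConj (d n : ℕ) : ℝ := surdVal (-√d) (sqrtPQ d n)

lemma sqrtPQ_snd_ne_zero_and_dvd (hd : ¬ IsSquare d) (n : ℕ) :
    (sqrtPQ d n).2 ≠ 0 ∧ (sqrtPQ d n).2 ∣ d - (sqrtPQ d n).1 ^ 2 := by
  induction n with
  | zero => exact ⟨one_ne_zero, one_dvd _⟩
  | succ n ih =>
    refine ⟨surdStep_snd_ne_zero (s := √d) ?_ (irrational_sqrt_natCast_iff.2 hd) ih.2,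
      Dvd.intro_left _ (surdStep_snd_mul ih.2)⟩
    simp

lemma cq_sqrt_eq_surdVal (hd : ¬ IsSquare d) (n : ℕ) :
    cq √d n = surdVal √d (sqrtPQ d n) := by
  induction n with
  | zero => simp [cq, sqrtPQ, surdVal]
  | succ n ih =>
    obtain ⟨hQ, hdvd⟩ := sqrtPQ_snd_ne_zero_and_dvd hd n
    rw [cq_succ, ih, inv_sub_surdVal (by simp) (irrational_sqrt_natCast_iff.2 hd) _ hQ hdvd]
    rfl

lemma cqConj_zero (d : ℕ) : cqConj d 0 = -√d := by
  simp [cqConj, sqrtPQ, surdVal]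

lemma cqConj_succ (hd : ¬ IsSquare d) (n : ℕ) :
    cqConj d (n + 1) = (cqConj d n - pq √d n)⁻¹ := by
  obtain ⟨hQ, hdvd⟩ := sqrtPQ_snd_ne_zero_and_dvd hd n
  exact (inv_sub_surdVal (by simp) (irrational_sqrt_natCast_iff.2 hd).neg _ hQ hdvd).symm

lemma cqConj_eq_of_cq_eq (hd : ¬ IsSquare d) {m n : ℕ} (h : cq √d m = cq √d n) :
    cqConj d m = cqConj d n := by
  rw [cq_sqrt_eq_surdVal hd, cq_sqrt_eq_surdVal hd] at h
  rw [cqConj, cqConj, surdVal_injective (irrational_sqrt_natCast_iff.2 hd)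
    (sqrtPQ_snd_ne_zero_and_dvd hd m).1 (sqrtPQ_snd_ne_zero_and_dvd hd n).1 h]

lemma one_lt_cq_sqrt (hd : ¬ IsSquare d) (n : ℕ) : 1 < cq √d n := by
  rcases n.eq_zero_or_pos with rfl | hn
  · have : 1 < d := by
      by_contra! h
      interval_cases d
      exacts [hd IsSquare.zero, hd IsSquare.one]
    exact Real.lt_sqrt_of_sq_lt (by exact_mod_cast this)
  · exact one_lt_cq (irrational_sqrt_natCast_iff.2 hd) hn

lemma cqConj_mem_Ioo (hd : ¬ IsSquare d) {n : ℕ} (hn : 1 ≤ n) :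
    cqConj d n ∈ Set.Ioo (-1) 0 := by
  have hstep (m : ℕ) (hm : cqConj d m < 0) : cqConj d (m + 1) ∈ Set.Ioo (-1) 0 := by
    have ha : (1 : ℝ) ≤ pq √d m := by
      exact_mod_cast Int.le_floor.2 (by exact_mod_cast (one_lt_cq_sqrt hd m).le)
    have ht : 1 < -(cqConj d m - pq √d m) := by linarith
    have hinv := inv_lt_one_of_one_lt₀ ht
    rw [inv_neg] at hinv
    rw [cqConj_succ hd]
    exact ⟨by linarith, inv_lt_zero.2 (by linarith)⟩
  obtain ⟨m, rfl⟩ := Nat.exists_eq_add_of_le' hn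
  induction m with
  | zero =>
    refine hstep 0 ?_
    rw [cqConj_zero]
    exact neg_neg_of_pos ((one_lt_cq_sqrt hd 0).trans' zero_lt_one)
  | succ m ih => exact hstep _ (ih (Nat.le_add_left 1 m)).2

lemma neg_inv_cqConj_succ (hd : ¬ IsSquare d) (n : ℕ) :
    -(cqConj d (n + 1))⁻¹ = pq √d n + -cqConj d n := by
  rw [cqConj_succ hd, inv_inv]
  ring

lemma pq_sqrt_eq_floor_neg_inv_cqConj (hd : ¬ IsSquare d) {n : ℕ} (hn : 1 ≤ n) :
    pq √d n = ⌊-(cqConj d (n + 1))⁻¹⌋ := by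
  obtain ⟨h1, h0⟩ := cqConj_mem_Ioo hd hn
  rw [neg_inv_cqConj_succ hd, Int.floor_intCast_add,
    Int.floor_eq_zero_iff.2 ⟨by linarith, by linarith⟩, add_zero]

lemma fract_neg_inv_cqConj_succ (hd : ¬ IsSquare d) {n : ℕ} (hn : 1 ≤ n) :
    Int.fract (-(cqConj d (n + 1))⁻¹) = -cqConj d n := by
  obtain ⟨h1, h0⟩ := cqConj_mem_Ioo hd hn
  rw [neg_inv_cqConj_succ hd, Int.fract_intCast_add, Int.fract_eq_self]
  constructor <;> linarith

lemma cq_sqrt_eq_of_succ_eq (hd : ¬ IsSquare d) {m n : ℕ} (hm : 1 ≤ m) (hn : 1 ≤ n)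
    (h : cq √d (m + 1) = cq √d (n + 1)) : cq √d m = cq √d n := by
  have hpq : pq √d m = pq √d n := by
    rw [pq_sqrt_eq_floor_neg_inv_cqConj hd hm, pq_sqrt_eq_floor_neg_inv_cqConj hd hn,
      cqConj_eq_of_cq_eq hd h]
  rw [cq_eq_pq_add_inv _ m, cq_eq_pq_add_inv _ n, hpq, h]

lemma cq_sqrt_one_add_eq_of_eq (hd : ¬ IsSquare d) {i S : ℕ}
    (h : cq √d (i + 1 + S) = cq √d (i + 1)) : cq √d (1 + S) = cq √d 1 := by
  induction i with
  | zero => simpa using h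
  | succ i ih =>
    refine ih (cq_sqrt_eq_of_succ_eq hd (by omega) (by omega) ?_)
    rwa [Nat.add_right_comm]

/-- Reducedness of `cq √d n = (P + √d) / Q` (it exceeds `1`, its conjugate lies in `(-1, 0)`)
forces `0 < P < √d` and `0 < Q < P + √d`. -/
lemma sqrtPQ_mem_Icc (hd : ¬ IsSquare d) {n : ℕ} (hn : 1 ≤ n) :
    sqrtPQ d n ∈ Set.Icc (0, 0) (⌊√(d : ℝ)⌋, ⌊2 * √(d : ℝ)⌋) := by
  have hx := one_lt_cq_sqrt hd n
  obtain ⟨hy1, hy0⟩ := cqConj_mem_Ioo hd hn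
  rw [cq_sqrt_eq_surdVal hd] at hx
  simp only [cqConj, surdVal] at hx hy1 hy0
  generalize sqrtPQ d n = v at hx hy1 hy0 ⊢
  obtain ⟨P, Q⟩ := v
  have hs : 0 < √(d : ℝ) := (one_lt_cq_sqrt hd 0).trans' zero_lt_one
  have hQ : (0 : ℝ) < Q := by
    have : (P + √d) / Q - (P + -√d) / Q = 2 * √d / Q := by ring
    refine (div_pos_iff_of_pos_left (by positivity : (0 : ℝ) < 2 * √d)).1 ?_
    rw [← this]
    linarith
  rw [lt_div_iff₀ hQ] at hx hy1
  rw [div_lt_iff₀ hQ] at hy0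
  have hP : (P : ℝ) < √d := by linarith
  simp only [Set.mem_Icc, Prod.mk_le_mk]
  refine ⟨⟨?_, ?_⟩, Int.le_floor.2 hP.le, Int.le_floor.2 ?_⟩
  · exact_mod_cast (show (0 : ℝ) ≤ P by linarith)
  · exact_mod_cast hQ.le
  · linarith

lemma exists_cq_sqrt_period (hd : ¬ IsSquare d) : ∃ S, 1 ≤ S ∧ cq √d (1 + S) = cq √d 1 := by
  obtain ⟨i, j, hij, h⟩ := (Set.finite_Icc _ _).exists_lt_map_eq_of_forall_mem
    (f := fun i => sqrtPQ d (i + 1)) fun i => sqrtPQ_mem_Icc hd (Nat.le_add_left 1 i)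
  refine ⟨j - i, by omega, cq_sqrt_one_add_eq_of_eq hd (i := i) ?_⟩
  rw [show i + 1 + (j - i) = j + 1 by omega, cq_sqrt_eq_surdVal hd, cq_sqrt_eq_surdVal hd]
  exact congrArg _ h.symm

lemma cq_sqrt_one_add_eq_of_pq_period (hd : ¬ IsSquare d) {T : ℕ}
    (hT : ∀ n, 1 ≤ n → pq √d (n + T) = pq √d n) : cq √d (1 + T) = cq √d 1 := by
  have hirr := irrational_sqrt_natCast_iff.2 hd
  obtain ⟨S, hS1, hS⟩ := exists_cq_sqrt_period hd
  refine eq_of_pq_eq_of_cq_eq (irrational_cq hirr _) (irrational_cq hirr _) (fun n => ?_) hS1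
    ?_ ?_
  · rw [← pq_add, ← pq_add, Nat.add_right_comm, hT _ (Nat.le_add_right 1 n)]
  · rw [← cq_add, cq_add_of_cq_eq hS (Nat.le_add_right 1 T)]
  · rw [← cq_add, hS]

lemma cq_neg_inv_cqConj (hd : ¬ IsSquare d) (j : ℕ) {n : ℕ} (hn : 1 ≤ n) :
    cq (-(cqConj d (n + j + 1))⁻¹) j = -(cqConj d (n + 1))⁻¹ := by
  induction j generalizing n with
  | zero => rfl
  | succ j ih =>
    rw [cq, show n + (j + 1) + 1 = n + 1 + j + 1 by ring, ih (Nat.le_add_left 1 n),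
      fract_neg_inv_cqConj_succ hd (Nat.le_add_left 1 n), inv_neg]

end SqrtContinuedFraction

/-- the partial quotients of `√d` (for `d` not a perfect square) are
periodic from rank 1; for the minimal period `T`, `a_T = 2a_0` and
`(a_1, …, a_{T-1})` is a palindrome. -/
theorem stmt6 (d : ℕ) (hd : ¬ IsSquare d) :
    (∃ T, 1 ≤ T ∧ ∀ n, 1 ≤ n →
        pq (Real.sqrt d) (n + T) = pq (Real.sqrt d) n) ∧
    ∀ T, 1 ≤ T →
      (∀ n, 1 ≤ n → pq (Real.sqrt d) (n + T) = pq (Real.sqrt d) n) →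
      (∀ T', 1 ≤ T' →
        (∀ n, 1 ≤ n → pq (Real.sqrt d) (n + T') = pq (Real.sqrt d) n) → T ≤ T') →
      pq (Real.sqrt d) T = 2 * pq (Real.sqrt d) 0 ∧
      ∀ k, 1 ≤ k → k ≤ T - 1 → pq (Real.sqrt d) k = pq (Real.sqrt d) (T - k) := by
  obtain ⟨S, hS1, hS⟩ := exists_cq_sqrt_period hd
  refine ⟨⟨S, hS1, fun n hn => by rw [pq, pq, cq_add_of_cq_eq hS hn]⟩, fun T hT1 hT _ => ?_⟩
  have hw : -(cqConj d (T + 1))⁻¹ = √d + pq √d 0 := by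
    have hcq : cq √d (T + 1) = cq √d (0 + 1) := by
      rw [Nat.add_comm T]
      exact cq_sqrt_one_add_eq_of_pq_period hd hT
    rw [cqConj_eq_of_cq_eq hd hcq, neg_inv_cqConj_succ hd, cqConj_zero, neg_neg, add_comm]
  refine ⟨?_, fun k hk hkT => ?_⟩
  · rw [pq_sqrt_eq_floor_neg_inv_cqConj hd hT1, hw, Int.floor_add_intCast, two_mul]
    rfl
  · have hrev := cq_neg_inv_cqConj hd k (n := T - k) (by omega)
    rw [show T - k + k + 1 = T + 1 by omega, hw, cq_add_intCast _ _ hk] at hrev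
    rw [pq_sqrt_eq_floor_neg_inv_cqConj hd (by omega : 1 ≤ T - k), ← hrev]
    rfl
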